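/- arXiv:1706.01590 — 3 statements merged into one kernel-verified Lean document; each statement's English description precedes it below -/
import Mathlib

section
/- Let h : [0,∞) → ℝ be locally integrable and suppose there is a constant L > 0 such that for almost every t ∈ [0,∞) and every δ > 0 one has (1/δ) ∫_t^{t+δ} h(s) ds ≤ L·δ + h(t). Then for almost every pair 0 < s ≤ t < ∞ one has h(t) − h(s) ≤ 6L(t − s). -/
open MeasureTheory

open Set Filter intervalIntegral
open scoped Topology

/-- Core monotonicity lemma: if for a.e. `x ∈ (s,t)` the forward chord slope to `c`
is at most `f x`, and the slope from `s` is at most `K`, then the slope from `t` is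
at most `K`. -/
private lemma core_slope {f : ℝ → ℝ} {s t c K : ℝ} (hst : s < t) (htc : t < c)
    (hint : IntervalIntegrable f volume s c)
    (hgood : ∀ᵐ x ∂(volume.restrict (Set.Ioo s t)),
      (∫ v in x..c, f v) ≤ (c - x) * f x)
    (hK : (∫ v in s..c, f v) ≤ (c - s) * K) :
    (∫ v in t..c, f v) ≤ (c - t) * K := by
  by_contra hcon
  push_neg at hcon
  set A : ℝ → ℝ := fun x => ∫ v in x..c, f v with hA
  set D : ℝ → ℝ := fun x => A x - (c - x) * K with hD
  have hsc : s ≤ c := (hst.trans htc).le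
  have hIic : Icc s t ⊆ uIcc s c := by
    rw [uIcc_of_le hsc]; exact Icc_subset_Icc le_rfl htc.le
  have hcontA : ContinuousOn A (Icc s t) := by
    have h1 : IntegrableOn f (uIcc s c) volume := by
      rw [uIcc_of_le hsc]
      exact (intervalIntegrable_iff_integrableOn_Icc_of_le hsc).mp hint
    exact (intervalIntegral.continuousOn_primitive_interval_left h1).mono hIic
  have hcontD : ContinuousOn D (Icc s t) :=
    hcontA.sub (Continuous.continuousOn (by continuity))
  set S : Set ℝ := Icc s t ∩ D ⁻¹' (Iic 0) with hS
  have hSclosed : IsClosed S :=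
    hcontD.preimage_isClosed_of_isClosed isClosed_Icc isClosed_Iic
  have hDs : D s ≤ 0 := by
    simp only [hD, hA]
    linarith
  have hsmem : s ∈ S := ⟨⟨le_rfl, hst.le⟩, hDs⟩
  have hSne : S.Nonempty := ⟨s, hsmem⟩
  have hSbdd : BddAbove S := ⟨t, fun x hx => hx.1.2⟩
  set a := sSup S with ha
  have haS : a ∈ S := hSclosed.csSup_mem hSne hSbdd
  have hsa : s ≤ a := le_csSup hSbdd hsmem
  have hDt : 0 < D t := by simp only [hD, hA]; linarith
  have hat : a < t := by
    rcases lt_or_eq_of_le haS.1.2 with h | h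
    · exact h
    · exfalso; rw [h] at haS; exact absurd haS.2 (not_le.mpr hDt)
  have hDpos : ∀ x ∈ Ioo a t, 0 < D x := by
    intro x hx
    by_contra hle
    push_neg at hle
    have : x ∈ S := ⟨⟨hsa.trans hx.1.le, hx.2.le⟩, hle⟩
    exact absurd (le_csSup hSbdd this) (not_le.mpr hx.1)
  -- interval integrability on subintervals
  have hac : a ≤ c := haS.1.2.trans htc.le
  have hint_at : IntervalIntegrable f volume a t := by
    apply hint.mono_set
    rw [uIcc_of_le (hat.le), uIcc_of_le hsc]
    exact Icc_subset_Icc hsa (htc.le)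
  have hint_tc : IntervalIntegrable f volume t c := by
    apply hint.mono_set
    rw [uIcc_of_le htc.le, uIcc_of_le hsc]
    exact Icc_subset_Icc (hst.le.trans le_rfl) le_rfl
  -- D t - D a = ∫ a..t (K - f)
  have hadd : (∫ v in a..t, f v) + ∫ v in t..c, f v = ∫ v in a..c, f v :=
    intervalIntegral.integral_add_adjacent_intervals hint_at hint_tc
  have hKint : IntervalIntegrable (fun _ : ℝ => K) volume a t := intervalIntegrable_const
  have hkey : D t - D a = ∫ v in a..t, (K - f v) := by
    have h2 : (∫ v in a..t, (K - f v)) = (∫ v in a..t, (fun _ => K) v) - ∫ v in a..t, f v :=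
      intervalIntegral.integral_sub hKint hint_at
    have h3 : (∫ _ in a..t, K) = (t - a) * K := by
      simp [smul_eq_mul, mul_comm]
    simp only [hD, hA] at *
    rw [h2, h3]
    linarith
  -- a.e. nonnegativity of f - K on (a, t)
  have hgood' : ∀ᵐ x ∂(volume.restrict (Set.Ioo a t)),
      (∫ v in x..c, f v) ≤ (c - x) * f x :=
    ae_restrict_of_ae_restrict_of_subset (Ioo_subset_Ioo hsa le_rfl) hgood
  have hnn : 0 ≤ᵐ[volume.restrict (Icc a t)] fun v => f v - K := by
    have hIoo : (volume.restrict (Icc a t)) = (volume.restrict (Ioo a t)) := by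
      rw [Measure.restrict_congr_set Ioo_ae_eq_Icc]
    rw [hIoo]
    filter_upwards [hgood', ae_restrict_mem measurableSet_Ioo] with x hx hmem
    have hxc : 0 < c - x := by have := hmem.2; linarith
    have hDx := hDpos x hmem
    simp only [hD, hA] at hDx
    have : (c - x) * K < (c - x) * f x := by linarith
    have hlt : K < f x := lt_of_mul_lt_mul_left this hxc.le
    simp only [Pi.zero_apply]
    linarith
  have hint_fK : IntervalIntegrable (fun v => f v - K) volume a t := hint_at.sub hKint
  have hnonneg : 0 ≤ ∫ v in a..t, (f v - K) :=
    intervalIntegral.integral_nonneg_of_ae_restrict hat.le hnn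
  have hsw : (∫ v in a..t, (K - f v)) = -∫ v in a..t, (f v - K) := by
    rw [← intervalIntegral.integral_neg]
    congr 1; ext v; ring
  have : D t ≤ D a := by rw [← sub_nonpos, hkey, hsw]; linarith
  have hDa : D a ≤ 0 := haS.2
  linarith

/-- One-sided Lebesgue differentiation: right averages converge a.e. -/
private lemma right_leb {f : ℝ → ℝ} (hf : LocallyIntegrable f volume) :
    ∀ᵐ t : ℝ ∂volume,
      Tendsto (fun c => (c - t)⁻¹ * ∫ v in t..c, f v) (𝓝[>] t) (𝓝 (f t)) := by
  filter_upwards [(IsUnifLocDoublingMeasure.vitaliFamily (volume : Measure ℝ)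
    1).ae_tendsto_average hf] with t ht
  have h2 := ht.comp (Real.tendsto_Icc_vitaliFamily_right t)
  apply h2.congr'
  filter_upwards [self_mem_nhdsWithin] with c (hc : t < c)
  show ⨍ y in Icc t c, f y = (c - t)⁻¹ * ∫ v in t..c, f v
  rw [setAverage_eq, intervalIntegral.integral_of_le hc.le, ← integral_Icc_eq_integral_Ioc,
    Real.volume_real_Icc_of_le hc.le]
  simp [smul_eq_mul]

theorem stmt_0 (h : ℝ → ℝ) (L : ℝ) (hL : 0 < L)
    (hloc : LocallyIntegrableOn h (Set.Ici (0:ℝ)))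
    (hyp : ∀ᵐ t ∂(volume.restrict (Set.Ici (0:ℝ))), ∀ δ > 0,
      (1/δ) * ∫ s in t..(t+δ), h s ≤ L * δ + h t) :
    ∀ᵐ p : ℝ × ℝ ∂(volume : Measure (ℝ × ℝ)),
      0 < p.1 → p.1 ≤ p.2 → h p.2 - h p.1 ≤ 6 * L * (p.2 - p.1) := by
  classical
  set hi : ℝ → ℝ := (Set.Ici (0:ℝ)).indicator h with hhi
  set f : ℝ → ℝ := fun x => hi x - 2 * L * x with hfdef
  -- local integrability of hi and f
  have hiloc : LocallyIntegrable hi volume := by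
    rw [locallyIntegrable_iff]
    intro k hk
    have hck : IsCompact (Set.Ici (0:ℝ) ∩ k) := hk.inter_left isClosed_Ici
    have h1 : IntegrableOn h (Set.Ici (0:ℝ) ∩ k) volume :=
      hloc.integrableOn_compact_subset Set.inter_subset_left hck
    rw [IntegrableOn, hhi, integrable_indicator_iff measurableSet_Ici]
    rwa [IntegrableOn, Measure.restrict_restrict measurableSet_Ici]
  have hfloc : LocallyIntegrable f volume := by
    apply hiloc.sub
    exact (by continuity : Continuous fun x : ℝ => 2 * L * x).locallyIntegrable
  have hfint : ∀ a b : ℝ, IntervalIntegrable f volume a b := fun a b =>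
    (hfloc.integrableOn_isCompact isCompact_uIcc).intervalIntegrable
  have hiint : ∀ a b : ℝ, IntervalIntegrable hi volume a b := fun a b =>
    (hiloc.integrableOn_isCompact isCompact_uIcc).intervalIntegrable
  -- the good forward-slope condition for f
  have hgood : ∀ᵐ x ∂(volume.restrict (Set.Ici (0:ℝ))),
      ∀ c, x < c → (∫ v in x..c, f v) ≤ (c - x) * f x := by
    filter_upwards [hyp, ae_restrict_mem measurableSet_Ici] with x hx hx0
    intro c hc
    have hδ : 0 < c - x := by linarith
    have h1 := hx (c - x) hδ
    rw [show x + (c - x) = c by ring] at h1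
    have e1 : (∫ v in x..c, h v) = ∫ v in x..c, hi v := by
      rw [intervalIntegral.integral_of_le hc.le, intervalIntegral.integral_of_le hc.le]
      apply setIntegral_congr_fun measurableSet_Ioc
      intro v hv
      have : v ∈ Set.Ici (0:ℝ) := le_trans hx0 hv.1.le
      rw [hhi, Set.indicator_of_mem this]
    have e2 : (∫ v in x..c, f v) = (∫ v in x..c, hi v) - L * (c^2 - x^2) := by
      have hsub : (∫ v in x..c, f v)
          = (∫ v in x..c, hi v) - ∫ v in x..c, (2 * L * v) := by
        rw [hfdef]
        exact intervalIntegral.integral_sub (hiint x c)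
          ((by continuity : Continuous fun v : ℝ => 2 * L * v).intervalIntegrable x c)
      rw [hsub]
      have : (∫ v in x..c, (2 * L * v)) = L * (c^2 - x^2) := by
        rw [intervalIntegral.integral_const_mul, integral_id]
        ring
      rw [this]
    have h2 : (∫ v in x..c, h v) ≤ (c - x) * (L * (c - x) + h x) := by
      have hmul := mul_le_mul_of_nonneg_left h1 hδ.le
      calc (∫ v in x..c, h v)
          = (c - x) * ((1/(c-x)) * ∫ v in x..c, h v) := by field_simp
        _ ≤ (c - x) * (L * (c - x) + h x) := hmul
    have hfx : f x = h x - 2 * L * x := by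
      rw [hfdef]; simp only [hhi, Set.indicator_of_mem hx0]
    rw [e2, ← e1, hfx]
    nlinarith [h2]
  -- Lebesgue points of f
  have hleb := right_leb hfloc
  -- combine into a single a.e. property on ℝ
  set Q : ℝ → Prop := fun x =>
    (x ∈ Set.Ici (0:ℝ) → ∀ c, x < c → (∫ v in x..c, f v) ≤ (c - x) * f x) ∧
    Tendsto (fun c => (c - x)⁻¹ * ∫ v in x..c, f v) (𝓝[>] x) (𝓝 (f x)) with hQ
  have hcomb : ∀ᵐ x : ℝ ∂volume, Q x := (ae_imp_of_ae_restrict hgood).and hleb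
  have hN : volume {x : ℝ | ¬ Q x} = 0 := by
    rw [← MeasureTheory.ae_iff]; exact hcomb
  -- lift to the product
  have hprod : ∀ᵐ p : ℝ × ℝ ∂(volume : Measure (ℝ × ℝ)), Q p.1 ∧ Q p.2 := by
    have h1 : (volume : Measure (ℝ × ℝ)) {p : ℝ × ℝ | ¬ Q p.1} = 0 := by
      have hset : {p : ℝ × ℝ | ¬ Q p.1} = {x : ℝ | ¬ Q x} ×ˢ (Set.univ : Set ℝ) := by
        ext p; simp [Set.mem_prod]
      rw [Measure.volume_eq_prod, hset, Measure.prod_prod, hN, zero_mul]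
    have h2 : (volume : Measure (ℝ × ℝ)) {p : ℝ × ℝ | ¬ Q p.2} = 0 := by
      have hset : {p : ℝ × ℝ | ¬ Q p.2} = (Set.univ : Set ℝ) ×ˢ {x : ℝ | ¬ Q x} := by
        ext p; simp [Set.mem_prod]
      rw [Measure.volume_eq_prod, hset, Measure.prod_prod, hN, mul_zero]
    rw [MeasureTheory.ae_iff]
    refine measure_mono_null ?_ (measure_union_null h1 h2)
    intro p hp
    simp only [Set.mem_setOf_eq, not_and_or, Set.mem_union] at hp ⊢
    exact hp
  -- conclude
  filter_upwards [hprod] with p hp hp1 hp12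
  obtain ⟨hq1, hq2⟩ := hp
  rcases eq_or_lt_of_le hp12 with heq | hlt
  · rw [← heq]; simp
  · have hs0 : (0:ℝ) ≤ p.1 := hp1.le
    have hgs := hq1.1 hs0
    -- key : f p.2 ≤ f p.1
    have key : f p.2 ≤ f p.1 := by
      apply le_of_tendsto hq2.2
      filter_upwards [self_mem_nhdsWithin] with c (hc : p.2 < c)
      have hgoodae : ∀ᵐ x ∂(volume.restrict (Set.Ioo p.1 p.2)),
          (∫ v in x..c, f v) ≤ (c - x) * f x := by
        have hsub : Set.Ioo p.1 p.2 ⊆ Set.Ici (0:ℝ) := fun x hx => (hp1.trans hx.1).le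
        filter_upwards [ae_restrict_of_ae_restrict_of_subset hsub hgood,
          ae_restrict_mem measurableSet_Ioo] with x hx hmem
        exact hx c (hmem.2.trans hc)
      have hcore := core_slope hlt hc (hfint p.1 c) hgoodae (hgs c (hlt.trans hc))
      have hpos : (0:ℝ) < c - p.2 := by linarith
      have h3 : (c - p.2)⁻¹ * (∫ v in p.2..c, f v)
          ≤ (c - p.2)⁻¹ * ((c - p.2) * f p.1) :=
        mul_le_mul_of_nonneg_left hcore (inv_nonneg.mpr hpos.le)
      rwa [inv_mul_cancel_left₀ (ne_of_gt hpos)] at h3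
    have hfs : f p.1 = h p.1 - 2 * L * p.1 := by
      simp only [hfdef]
      rw [hhi, Set.indicator_of_mem (Set.mem_Ici.mpr hs0)]
    have hft : f p.2 = h p.2 - 2 * L * p.2 := by
      simp only [hfdef]
      rw [hhi, Set.indicator_of_mem (Set.mem_Ici.mpr (le_trans hs0 hp12))]
    rw [hfs, hft] at key
    nlinarith [mul_pos hL (sub_pos.mpr hlt)]
end

section
/- Let h : (0,∞) → ℝ be differentiable and suppose there is L > 0 such that for every t > 0 and every δ > 0, (1/δ) ∫_t^{t+δ} h(s) ds ≤ L·δ + h(t). Then for all 0 < s ≤ t one has h(t) − h(s) ≤ 3L(t − s). -/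
open MeasureTheory

lemma deriv_le_aux (h : ℝ → ℝ) (L : ℝ)
    (hdiff : DifferentiableOn ℝ h (Set.Ioi (0:ℝ)))
    (hyp : ∀ t > (0:ℝ), ∀ δ > (0:ℝ),
      (1/δ) * ∫ s in t..(t+δ), h s ≤ L * δ + h t)
    (t : ℝ) (ht : 0 < t) (m : ℝ) (hm : HasDerivAt h m t) : m ≤ 2 * L := by
  by_contra H
  push_neg at H
  set ε : ℝ := (m - 2*L)/2 with hε_def
  have hε : 0 < ε := by simp [hε_def]; linarith
  have hlo := hasDerivAt_iff_isLittleO.mp hm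
  have hb := hlo.bound hε
  rw [Metric.eventually_nhds_iff] at hb
  obtain ⟨δ0, hδ0, hbnd⟩ := hb
  set δ : ℝ := δ0/2 with hδ_def
  have hδ : 0 < δ := by positivity
  -- pointwise bound on [t, t+δ]
  have hpt : ∀ u ∈ Set.Icc t (t+δ), h t + (m - ε) * (u - t) ≤ h u := by
    intro u hu
    have h1 : 0 ≤ u - t := by linarith [hu.1]
    have h2 : u - t ≤ δ := by linarith [hu.2]
    have hd : dist u t < δ0 := by
      rw [Real.dist_eq, abs_of_nonneg h1]; linarith
    have := hbnd hd
    rw [Real.norm_eq_abs, Real.norm_eq_abs, abs_of_nonneg h1] at this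
    have := abs_le.mp this
    simp only [smul_eq_mul] at this
    nlinarith [this.1]
  -- continuity on the interval
  have hcont : ContinuousOn h (Set.Icc t (t+δ)) := by
    intro u hu
    have hu0 : u ∈ Set.Ioi (0:ℝ) := by
      simp only [Set.mem_Ioi]; linarith [hu.1]
    exact ((hdiff.differentiableAt (Ioi_mem_nhds hu0.out)).continuousAt).continuousWithinAt
  have hint1 : IntervalIntegrable h volume t (t+δ) := by
    apply ContinuousOn.intervalIntegrable
    rwa [Set.uIcc_of_le (by linarith : t ≤ t+δ)]
  have hint2 : IntervalIntegrable (fun u => h t + (m - ε) * (u - t)) volume t (t+δ) := by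
    apply Continuous.intervalIntegrable
    continuity
  have hmono := intervalIntegral.integral_mono_on (by linarith : t ≤ t+δ) hint2 hint1 hpt
  -- compute the left integral
  have hid : (∫ u in t..(t+δ), (u - t)) = δ^2/2 := by
    rw [intervalIntegral.integral_comp_sub_right (fun x => x) t]
    rw [integral_id]
    ring_nf
  have hcomp : (∫ u in t..(t+δ), (h t + (m - ε) * (u - t)))
      = δ * h t + (m - ε) * (δ^2/2) := by
    rw [intervalIntegral.integral_add (intervalIntegrable_const)
        (((by continuity : Continuous (fun u : ℝ => (m - ε) * (u - t)))).intervalIntegrable t (t+δ))]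
    rw [intervalIntegral.integral_const, intervalIntegral.integral_const_mul, hid]
    simp [smul_eq_mul]
  rw [hcomp] at hmono
  have hup := hyp t ht δ hδ
  have hup' : (∫ u in t..(t+δ), h u) ≤ δ * (L * δ + h t) := by
    have heq : (∫ u in t..(t+δ), h u) = δ * (1/δ * (∫ u in t..(t+δ), h u)) := by
      field_simp
    rw [heq]
    exact mul_le_mul_of_nonneg_left hup hδ.le
  have hkey : (m - ε) * (δ^2/2) ≤ L * δ^2 := by nlinarith
  have hδ2 : 0 < δ^2 := by positivity
  nlinarith

theorem stmt_1 (h : ℝ → ℝ) (L : ℝ) (hL : 0 < L)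
    (hdiff : DifferentiableOn ℝ h (Set.Ioi (0:ℝ)))
    (hyp : ∀ t > (0:ℝ), ∀ δ > (0:ℝ),
      (1/δ) * ∫ s in t..(t+δ), h s ≤ L * δ + h t) :
    ∀ s t : ℝ, 0 < s → s ≤ t → h t - h s ≤ 3 * L * (t - s) := by
  intro s t hs hst
  set g : ℝ → ℝ := fun u => 2*L*u - h u with hg_def
  have hsub : Set.Icc s t ⊆ Set.Ioi (0:ℝ) := by
    intro u hu; simp only [Set.mem_Ioi]; linarith [hu.1]
  have hcont : ContinuousOn g (Set.Icc s t) := by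
    apply ContinuousOn.sub
    · exact (continuous_const.mul continuous_id).continuousOn
    · exact (hdiff.continuousOn.mono hsub)
  have hmono : MonotoneOn g (Set.Icc s t) := by
    apply monotoneOn_of_deriv_nonneg (convex_Icc s t) hcont
    · intro u hu
      rw [interior_Icc] at hu
      have hu0 : u ∈ Set.Ioi (0:ℝ) := by
        simp only [Set.mem_Ioi]; linarith [hu.1]
      have hd := hdiff.differentiableAt (Ioi_mem_nhds hu0.out)
      exact (((differentiableAt_id.const_mul (2*L)).sub hd).differentiableWithinAt)
    · intro u hu
      rw [interior_Icc] at hu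
      have hu0 : (0:ℝ) < u := by linarith [hu.1]
      have hd := hdiff.differentiableAt (Ioi_mem_nhds hu0)
      have hder : HasDerivAt g (2*L - deriv h u) u := by
        have h2 := ((hasDerivAt_id u).const_mul (2*L)).sub hd.hasDerivAt
        simp only [id, mul_one] at h2
        exact h2
      rw [hder.deriv]
      have := deriv_le_aux h L hdiff hyp u hu0 (deriv h u) hd.hasDerivAt
      linarith
  have hst' : g s ≤ g t := hmono (Set.left_mem_Icc.mpr hst) (Set.right_mem_Icc.mpr hst) hst
  simp only [hg_def] at hst'
  nlinarith
end

section
/- Let P : ℝ³ → ℝ³ be the orthogonal projection Px = x − ((x₁+x₂+x₃)/3)·(1,1,1), and let A₁ = (1/5)·[[5,0,0],[2,2,1],[2,1,2]]. Then the matrix Y₁ = Pᵀ A₁ P has eigenvalues exactly 0, 1/5, and 3/5. -/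
open Matrix
noncomputable def Pproj : Matrix (Fin 3) (Fin 3) ℝ :=
  Matrix.of fun i j => (if i = j then (1:ℝ) else 0) - 1/3

noncomputable def A1 : Matrix (Fin 3) (Fin 3) ℝ :=
  (1/5 : ℝ) • Matrix.of ![![5, 0, 0], ![2, 2, 1], ![2, 1, 2]]

noncomputable def Y1 : Matrix (Fin 3) (Fin 3) ℝ := Pprojᵀ * A1 * Pproj

lemma eig_iff_det (M : Matrix (Fin 3) (Fin 3) ℝ) (μ : ℝ) :
    Module.End.HasEigenvalue (Matrix.toLin' M) μ ↔
      (μ • (1 : Matrix (Fin 3) (Fin 3) ℝ) - M).det = 0 := by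
  rw [Module.End.hasEigenvalue_iff_mem_spectrum,
    show Matrix.toLin' M = Matrix.toLinAlgEquiv (Pi.basisFun ℝ (Fin 3)) M from rfl,
    AlgEquiv.spectrum_eq, spectrum.mem_iff, Algebra.algebraMap_eq_smul_one]
  simp only [Matrix.isUnit_iff_isUnit_det, isUnit_iff_ne_zero, not_not]

lemma Y1_eq : Y1 = !![2/5, -1/5, -1/5; -1/5, 1/5, 0; -1/5, 0, 1/5] := by
  ext i j
  fin_cases i <;> fin_cases j <;>
    simp [Y1, A1, Pproj, Matrix.mul_apply, Fin.sum_univ_three, Matrix.transpose_apply, Matrix.vecHead, Matrix.vecTail] <;>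
    norm_num

theorem stmt_9 :
    ∀ μ : ℝ, Module.End.HasEigenvalue (Matrix.toLin' Y1) μ ↔
      μ = 0 ∨ μ = 1/5 ∨ μ = 3/5 := by
  intro μ
  rw [eig_iff_det, Y1_eq]
  have h : (μ • (1 : Matrix (Fin 3) (Fin 3) ℝ) -
      !![2/5, -1/5, -1/5; -1/5, 1/5, 0; -1/5, 0, 1/5]).det
      = μ * ((μ - 1/5) * (μ - 3/5)) := by
    simp [Matrix.det_fin_three, Matrix.one_apply, Matrix.vecHead, Matrix.vecTail]
    ring
  rw [h, mul_eq_zero, mul_eq_zero, sub_eq_zero, sub_eq_zero]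
end
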